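/- Point identification under a valid instrument: let H be a real Hilbert space, X a complete subspace, and y, d, z, u ∈ H with all residuals appearing below nonzero, ⟨d^{⊥X}, z^{⊥X}⟩ ≠ 0 (equivalently R_{d∼z|X} ≠ 0). If R_{z∼u|X} = 0 (exogeneity) and R_{y∼z|X+span(u)+span(d)} = 0 (exclusion restriction), then f_{d∼u|X+span(z)}·R_{y∼u|X+span(z)+span(d)} = −f_{y∼z|X+span(d)}/R_{d∼z|X}, and consequently β_{y∼d|X+span(z)+span(u)} = ⟨y^{⊥X}, z^{⊥X}⟩/⟨d^{⊥X}, z^{⊥X}⟩, i.e. the causal effect equals the TSLS estimand. -/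

import Mathlib

/-!
R²-calculus in real Hilbert spaces (Freidling & Zhao, "Optimization-based
Sensitivity Analysis for Unmeasured Confounding using Partial Correlations").
-/

noncomputable section

open Submodule RealInnerProductSpace

variable {H : Type*} [NormedAddCommGroup H] [InnerProductSpace ℝ H]

/-- The residual `h^{⊥M} = h − P_M h` of `h` after projecting onto `M`. -/
def resid (M : Submodule ℝ H) [HasOrthogonalProjection M] (h : H) : H :=
  h - (orthogonalProjection M h : H)

/-- The marginal R²-value `R²_{y∼X} = 1 − ‖y^{⊥X}‖²/‖y‖²`. -/
def R2 (y : H) (X : Submodule ℝ H) [HasOrthogonalProjection X] : ℝ :=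
  1 - ‖resid X y‖ ^ 2 / ‖y‖ ^ 2

/-- The partial R²-value `R²_{y∼X|Z} = (R²_{y∼X+Z} − R²_{y∼Z})/(1 − R²_{y∼Z})`. -/
def R2p (y : H) (X Z : Submodule ℝ H) [HasOrthogonalProjection (X ⊔ Z)]
    [HasOrthogonalProjection Z] : ℝ :=
  (R2 y (X ⊔ Z) - R2 y Z) / (1 - R2 y Z)

/-- The partial R-value `R_{y∼x|Z} = ⟪y^{⊥Z}, x^{⊥Z}⟫/(‖y^{⊥Z}‖·‖x^{⊥Z}‖)`. -/
def Rp (y x : H) (Z : Submodule ℝ H) [HasOrthogonalProjection Z] : ℝ :=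
  ⟪resid Z y, resid Z x⟫ / (‖resid Z y‖ * ‖resid Z x‖)

/-- The partial f-value `f_{y∼x|Z} = R_{y∼x|Z}/√(1 − R²_{y∼x|Z})`. -/
def fp (y x : H) (Z : Submodule ℝ H) [HasOrthogonalProjection Z] : ℝ :=
  Rp y x Z / Real.sqrt (1 - Rp y x Z ^ 2)

/-- The regression estimand `β_{y∼d|M} = ⟪y^{⊥M}, d^{⊥M}⟫/‖d^{⊥M}‖²`. -/
def betaReg (y d : H) (M : Submodule ℝ H) [HasOrthogonalProjection M] : ℝ :=
  ⟪resid M y, resid M d⟫ / ‖resid M d‖ ^ 2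

/-- `σ_{y∼M} = ‖y^{⊥M}‖`. -/
def sigv (y : H) (M : Submodule ℝ H) [HasOrthogonalProjection M] : ℝ :=
  ‖resid M y‖

/-!
Regress `y` on `X`, `u` and `d`: `y = m + γ u + β d + r` with `m ∈ X` and `r ⊥ X, u, d`, and the
exclusion restriction says exactly that also `r ⊥ z`. As `r` is orthogonal to all of
`X + span {z, u, d}`, `β` is the coefficient `β_{y∼d|X+z+u}` of the long regression and `γ` is
`β_{y∼u|X+z+d}`. Pairing `y^{⊥X} = γ u^{⊥X} + β d^{⊥X} + r` with `z^{⊥X} ⊥ u^{⊥X}` (exogeneity)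
gives `⟪y^{⊥X}, z^{⊥X}⟫ = β ⟪d^{⊥X}, z^{⊥X}⟫`, the TSLS identity. For the other identity write
every f-value through the Gram determinant, `f_{y∼x|Z} = ⟪y^{⊥Z}, x^{⊥Z}⟫ / (‖x^{⊥Z}‖ ‖y^{⊥Z+x}‖)`:
both sides reduce to `γ ⟪u^{⊥X}, d^{⊥X}⟫ / (‖d^{⊥X+z}‖ ‖y^{⊥X+z+d}‖)`.
-/

theorem mem_orthogonal_sup_span_iff {M : Submodule ℝ H} {v r : H} :
    r ∈ (M ⊔ (ℝ ∙ v))ᗮ ↔ r ∈ Mᗮ ∧ ⟪v, r⟫ = 0 := by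
  rw [← inf_orthogonal, mem_inf, mem_orthogonal_singleton_iff_inner_right]

section Residual

variable (M : Submodule ℝ H) [HasOrthogonalProjection M]

theorem resid_eq_starProjection_orthogonal (h : H) : resid M h = Mᗮ.starProjection h :=
  (starProjection_orthogonal_val h).symm

theorem resid_add (h k : H) : resid M (h + k) = resid M h + resid M k := by
  simp only [resid_eq_starProjection_orthogonal, map_add]

theorem resid_smul (c : ℝ) (h : H) : resid M (c • h) = c • resid M h := by
  simp only [resid_eq_starProjection_orthogonal, map_smul]

theorem resid_eq_sub_starProjection (h : H) : resid M h = h - M.starProjection h := rfl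

theorem resid_mem_orthogonal (h : H) : resid M h ∈ Mᗮ :=
  sub_starProjection_mem_orthogonal h

variable {M}

theorem resid_eq_zero_of_mem {h : H} (hh : h ∈ M) : resid M h = 0 :=
  sub_eq_zero.2 (starProjection_eq_self_iff.2 hh).symm

theorem resid_eq_self_of_mem_orthogonal {h : H} (hh : h ∈ Mᗮ) : resid M h = h := by
  rw [resid_eq_starProjection_orthogonal, starProjection_eq_self_iff.2 hh]

theorem inner_resid_left_of_mem_orthogonal {r : H} (hr : r ∈ Mᗮ) (h : H) :
    ⟪resid M h, r⟫ = ⟪h, r⟫ := by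
  rw [resid_eq_sub_starProjection, inner_sub_left,
    inner_right_of_mem_orthogonal (starProjection_apply_mem M h) hr, sub_zero]

theorem inner_resid_resid_left (h k : H) : ⟪resid M h, resid M k⟫ = ⟪h, resid M k⟫ :=
  inner_resid_left_of_mem_orthogonal (resid_mem_orthogonal M k) h

theorem resid_congr {N : Submodule ℝ H} [HasOrthogonalProjection N] (hMN : M = N) (h : H) :
    resid M h = resid N h := by
  subst hMN; rfl

end Residual

section SupSpan

variable {M : Submodule ℝ H} [HasOrthogonalProjection M] {v : H}
  [HasOrthogonalProjection (M ⊔ (ℝ ∙ v))]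

theorem resid_sup_span (hv : resid M v ≠ 0) (h : H) :
    resid (M ⊔ (ℝ ∙ v)) h =
      resid M h - (⟪resid M h, resid M v⟫ / ‖resid M v‖ ^ 2) • resid M v := by
  set c := ⟪resid M h, resid M v⟫ / ‖resid M v‖ ^ 2
  have hmem : h - (resid M h - c • resid M v) ∈ M ⊔ (ℝ ∙ v) := by
    have : h - (resid M h - c • resid M v) =
        (M.starProjection h - c • M.starProjection v) + c • v := by
      simp only [resid_eq_sub_starProjection, smul_sub]; abel
    rw [this]
    exact add_mem (mem_sup_left (sub_mem (starProjection_apply_mem M h)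
      (smul_mem _ _ (starProjection_apply_mem M v))))
      (mem_sup_right (smul_mem _ _ (mem_span_singleton_self v)))
  have horth : resid M h - c • resid M v ∈ (M ⊔ (ℝ ∙ v))ᗮ := by
    have hM : resid M h - c • resid M v ∈ Mᗮ :=
      sub_mem (resid_mem_orthogonal M h) (smul_mem _ _ (resid_mem_orthogonal M v))
    refine mem_orthogonal_sup_span_iff.2 ⟨hM, ?_⟩
    have hv' : ‖resid M v‖ ≠ 0 := norm_ne_zero_iff.2 hv
    rw [← inner_resid_left_of_mem_orthogonal hM, inner_sub_right, inner_smul_right,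
      real_inner_self_eq_norm_sq, real_inner_comm]
    simp only [c, div_mul_cancel₀ _ (pow_ne_zero 2 hv'), sub_self]
  rw [resid_eq_sub_starProjection,
    eq_starProjection_of_mem_orthogonal hmem (by rwa [sub_sub_cancel]), sub_sub_cancel]

theorem inner_resid_sup_span (hv : resid M v ≠ 0) (h k : H) :
    ⟪resid (M ⊔ (ℝ ∙ v)) h, resid (M ⊔ (ℝ ∙ v)) k⟫ =
      ⟪resid M h, resid M k⟫ - ⟪resid M h, resid M v⟫ * ⟪resid M k, resid M v⟫ /
        ‖resid M v‖ ^ 2 := by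
  have hv' : ‖resid M v‖ ≠ 0 := norm_ne_zero_iff.2 hv
  rw [resid_sup_span hv h, resid_sup_span hv k]
  simp only [inner_sub_left, inner_sub_right, inner_smul_left, inner_smul_right,
    real_inner_self_eq_norm_sq, conj_trivial]
  rw [real_inner_comm (resid M v) (resid M k),
    real_inner_comm (resid M v) (resid M h)]
  field_simp
  ring

theorem sq_norm_mul_sq_norm_resid_sup_span (hv : resid M v ≠ 0) (h : H) :
    ‖resid M v‖ ^ 2 * ‖resid (M ⊔ (ℝ ∙ v)) h‖ ^ 2 =
      ‖resid M h‖ ^ 2 * ‖resid M v‖ ^ 2 - ⟪resid M h, resid M v⟫ ^ 2 := by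
  have hv' : ‖resid M v‖ ≠ 0 := norm_ne_zero_iff.2 hv
  rw [← real_inner_self_eq_norm_sq (resid (M ⊔ _) h), inner_resid_sup_span hv,
    real_inner_self_eq_norm_sq]
  field_simp

end SupSpan

section PartialCorrelation

variable {Z : Submodule ℝ H} [HasOrthogonalProjection Z]

theorem Rp_comm (y x : H) : Rp y x Z = Rp x y Z := by
  rw [Rp, Rp, real_inner_comm, mul_comm]

theorem fp_comm (y x : H) : fp y x Z = fp x y Z := by
  rw [fp, fp, Rp_comm]

theorem Rp_eq_zero_iff {y x : H} : Rp y x Z = 0 ↔ ⟪resid Z y, resid Z x⟫ = 0 := by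
  rw [Rp, div_eq_zero_iff, mul_eq_zero, norm_eq_zero, norm_eq_zero]
  refine ⟨?_, Or.inl⟩
  rintro (h | h | h) <;> simp [h]

theorem Rp_eq_betaReg_mul_div {y x : H} (hx : resid Z x ≠ 0) :
    Rp y x Z = betaReg y x Z * ‖resid Z x‖ / ‖resid Z y‖ := by
  have hx' : ‖resid Z x‖ ≠ 0 := norm_ne_zero_iff.2 hx
  rw [Rp, betaReg]
  field_simp

/-- The junk values agree: both sides vanish when a residual is zero or `R² = 1`. -/
theorem fp_eq_inner_div_sqrt (y x : H) :
    fp y x Z = ⟪resid Z y, resid Z x⟫ /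
      √(‖resid Z y‖ ^ 2 * ‖resid Z x‖ ^ 2 - ⟪resid Z y, resid Z x⟫ ^ 2) := by
  rcases eq_or_ne (‖resid Z y‖ * ‖resid Z x‖) 0 with h0 | h0
  · have hinner : ⟪resid Z y, resid Z x⟫ = 0 := by
      rcases mul_eq_zero.1 h0 with h | h <;> simp [norm_eq_zero.1 h]
    simp [fp, Rp, hinner]
  · have hR : 1 - Rp y x Z ^ 2 =
        (‖resid Z y‖ ^ 2 * ‖resid Z x‖ ^ 2 - ⟪resid Z y, resid Z x⟫ ^ 2) /
          (‖resid Z y‖ * ‖resid Z x‖) ^ 2 := by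
      rw [Rp, div_pow, one_sub_div (pow_ne_zero 2 h0), mul_pow]
    rw [fp, hR, Real.sqrt_div' _ (sq_nonneg _), Real.sqrt_sq (by positivity), Rp,
      div_div_div_cancel_right₀ h0]

theorem fp_eq_inner_div_norm_mul_norm_resid_sup_span {x : H}
    [HasOrthogonalProjection (Z ⊔ (ℝ ∙ x))] (hx : resid Z x ≠ 0) (y : H) :
    fp y x Z = ⟪resid Z y, resid Z x⟫ / (‖resid Z x‖ * ‖resid (Z ⊔ (ℝ ∙ x)) y‖) := by
  rw [fp_eq_inner_div_sqrt, ← sq_norm_mul_sq_norm_resid_sup_span hx, ← mul_pow,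
    Real.sqrt_sq (by positivity)]

theorem norm_resid_mul_norm_resid_sup_span_comm {v h : H} [HasOrthogonalProjection (Z ⊔ (ℝ ∙ v))]
    [HasOrthogonalProjection (Z ⊔ (ℝ ∙ h))] (hv : resid Z v ≠ 0) (hh : resid Z h ≠ 0) :
    ‖resid Z v‖ * ‖resid (Z ⊔ (ℝ ∙ v)) h‖ = ‖resid Z h‖ * ‖resid (Z ⊔ (ℝ ∙ h)) v‖ := by
  refine (pow_left_inj₀ (by positivity) (by positivity) two_ne_zero).1 ?_
  rw [mul_pow, mul_pow, sq_norm_mul_sq_norm_resid_sup_span hv,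
    sq_norm_mul_sq_norm_resid_sup_span hh, real_inner_comm]
  ring

end PartialCorrelation

section Regression

theorem exists_eq_add_smul_add_smul_add_resid (M : Submodule ℝ H) (u d : H)
    [HasOrthogonalProjection (M ⊔ (ℝ ∙ u) ⊔ (ℝ ∙ d))] (h : H) :
    ∃ m ∈ M, ∃ γ β : ℝ, h = m + γ • u + β • d + resid (M ⊔ (ℝ ∙ u) ⊔ (ℝ ∙ d)) h := by
  obtain ⟨w, hw, s, hs, hws⟩ := mem_sup.1 (starProjection_apply_mem (M ⊔ (ℝ ∙ u) ⊔ (ℝ ∙ d)) h)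
  obtain ⟨m, hm, t, ht, rfl⟩ := mem_sup.1 hw
  obtain ⟨γ, rfl⟩ := mem_span_singleton.1 ht
  obtain ⟨β, rfl⟩ := mem_span_singleton.1 hs
  refine ⟨m, hm, γ, β, ?_⟩
  rw [resid_eq_sub_starProjection, ← hws]
  abel

variable {M : Submodule ℝ H} [HasOrthogonalProjection M]

theorem inner_resid_eq_of_eq_add {h w p r k : H} (hw : w ∈ M) (hr : r ∈ Mᗮ) (hkr : ⟪k, r⟫ = 0)
    (h_eq : h = w + p + r) : ⟪resid M h, resid M k⟫ = ⟪resid M p, resid M k⟫ := by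
  rw [h_eq, resid_add, resid_add, resid_eq_zero_of_mem hw, resid_eq_self_of_mem_orthogonal hr,
    zero_add, inner_add_left, real_inner_comm _ r, inner_resid_left_of_mem_orthogonal hr, hkr,
    add_zero]

theorem betaReg_eq_of_eq_add {h w r v : H} {c : ℝ} (hw : w ∈ M) (hr : r ∈ (M ⊔ (ℝ ∙ v))ᗮ)
    (h_eq : h = w + c • v + r) (hv : resid M v ≠ 0) : betaReg h v M = c := by
  obtain ⟨hrM, hvr⟩ := mem_orthogonal_sup_span_iff.1 hr
  have hv' : ‖resid M v‖ ≠ 0 := norm_ne_zero_iff.2 hv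
  rw [betaReg, inner_resid_eq_of_eq_add hw hrM hvr h_eq, resid_smul, inner_smul_left,
    real_inner_self_eq_norm_sq, conj_trivial]
  field_simp

end Regression

section Instrument

variable {X : Submodule ℝ H} [HasOrthogonalProjection X] {y d z u m r : H} {γ β : ℝ}

theorem inner_resid_eq_of_eq_add_smul_add_smul {k : H} (hm : m ∈ X) (hrX : r ∈ Xᗮ)
    (hkr : ⟪k, r⟫ = 0) (hy_eq : y = m + γ • u + β • d + r) :
    ⟪resid X y, resid X k⟫ = γ * ⟪resid X u, resid X k⟫ + β * ⟪resid X d, resid X k⟫ := by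
  rw [inner_resid_eq_of_eq_add hm hrX hkr (by rw [hy_eq, add_assoc m]), resid_add, resid_smul,
    resid_smul, inner_add_left, real_inner_smul_left, real_inner_smul_left]

theorem betaReg_eq_inner_div_inner [HasOrthogonalProjection (X ⊔ (ℝ ∙ z) ⊔ (ℝ ∙ u))]
    (hm : m ∈ X) (hr : r ∈ (X ⊔ (ℝ ∙ z) ⊔ (ℝ ∙ u) ⊔ (ℝ ∙ d))ᗮ)
    (hy_eq : y = m + γ • u + β • d + r) (hzu : ⟪resid X z, resid X u⟫ = 0)
    (hdz : ⟪resid X d, resid X z⟫ ≠ 0) (hd6 : resid (X ⊔ (ℝ ∙ z) ⊔ (ℝ ∙ u)) d ≠ 0) :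
    betaReg y d (X ⊔ (ℝ ∙ z) ⊔ (ℝ ∙ u)) = ⟪resid X y, resid X z⟫ / ⟪resid X d, resid X z⟫ := by
  have hr' := hr
  simp only [mem_orthogonal_sup_span_iff] at hr'
  obtain ⟨⟨⟨hrX, hzr⟩, -⟩, -⟩ := hr'
  have hw : m + γ • u ∈ X ⊔ (ℝ ∙ z) ⊔ (ℝ ∙ u) :=
    add_mem (mem_sup_left (mem_sup_left hm))
      (mem_sup_right (smul_mem _ _ (mem_span_singleton_self u)))
  rw [betaReg_eq_of_eq_add hw hr hy_eq hd6,
    inner_resid_eq_of_eq_add_smul_add_smul hm hrX hzr hy_eq, real_inner_comm (resid X z), hzu,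
    mul_zero, zero_add, mul_div_cancel_right₀ _ hdz]

theorem fp_mul_Rp_eq_neg_fp_div_Rp [HasOrthogonalProjection (X ⊔ (ℝ ∙ z))]
    [HasOrthogonalProjection (X ⊔ (ℝ ∙ d))] [HasOrthogonalProjection (X ⊔ (ℝ ∙ z) ⊔ (ℝ ∙ d))]
    (hm : m ∈ X) (hr : r ∈ (X ⊔ (ℝ ∙ z) ⊔ (ℝ ∙ u) ⊔ (ℝ ∙ d))ᗮ)
    (hy_eq : y = m + γ • u + β • d + r) (hzu : ⟪resid X z, resid X u⟫ = 0)
    (hd : resid X d ≠ 0) (hz : resid X z ≠ 0) (hdz : ⟪resid X d, resid X z⟫ ≠ 0)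
    (hd2 : resid (X ⊔ (ℝ ∙ z)) d ≠ 0) (hz3 : resid (X ⊔ (ℝ ∙ d)) z ≠ 0)
    (hy4 : resid (X ⊔ (ℝ ∙ z) ⊔ (ℝ ∙ d)) y ≠ 0) (hu4 : resid (X ⊔ (ℝ ∙ z) ⊔ (ℝ ∙ d)) u ≠ 0) :
    fp d u (X ⊔ (ℝ ∙ z)) * Rp y u (X ⊔ (ℝ ∙ z) ⊔ (ℝ ∙ d)) =
      -(fp y z (X ⊔ (ℝ ∙ d)) / Rp d z X) := by
  have : HasOrthogonalProjection (X ⊔ (ℝ ∙ d) ⊔ (ℝ ∙ z)) := by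
    rw [sup_right_comm]; infer_instance
  have hr' := hr
  simp only [mem_orthogonal_sup_span_iff] at hr'
  obtain ⟨⟨⟨hrX, hzr⟩, -⟩, hdr⟩ := hr'
  have hγ : betaReg y u (X ⊔ (ℝ ∙ z) ⊔ (ℝ ∙ d)) = γ := by
    refine betaReg_eq_of_eq_add (w := m + β • d) ?_
      (by rwa [sup_right_comm (X ⊔ (ℝ ∙ z)) (ℝ ∙ d)]) (by rw [hy_eq, add_right_comm m]) hu4
    exact add_mem (mem_sup_left (mem_sup_left hm))
      (mem_sup_right (smul_mem _ _ (mem_span_singleton_self d)))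
  have hyz : ⟪resid X y, resid X z⟫ = β * ⟪resid X d, resid X z⟫ := by
    rw [inner_resid_eq_of_eq_add_smul_add_smul hm hrX hzr hy_eq, real_inner_comm (resid X z), hzu,
      mul_zero, zero_add]
  have hyd : ⟪resid X y, resid X d⟫ = γ * ⟪resid X u, resid X d⟫ + β * ‖resid X d‖ ^ 2 := by
    rw [inner_resid_eq_of_eq_add_smul_add_smul hm hrX hdr hy_eq, real_inner_self_eq_norm_sq]
  have hud : ⟪resid (X ⊔ (ℝ ∙ z)) u, resid (X ⊔ (ℝ ∙ z)) d⟫ = ⟪resid X u, resid X d⟫ := by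
    rw [inner_resid_sup_span hz, real_inner_comm (resid X z), hzu, zero_mul, zero_div, sub_zero]
  have hgram := norm_resid_mul_norm_resid_sup_span_comm hd hz
  rw [fp_comm, fp_eq_inner_div_norm_mul_norm_resid_sup_span hd2, Rp_eq_betaReg_mul_div hu4, hγ,
    fp_eq_inner_div_norm_mul_norm_resid_sup_span hz3,
    resid_congr (sup_right_comm X (ℝ ∙ d) (ℝ ∙ z)) y, hud, inner_resid_sup_span hd, hyz, hyd, Rp,
    real_inner_comm (resid X d) (resid X z)]
  field_simp [norm_ne_zero_iff.2 hd, norm_ne_zero_iff.2 hz, norm_ne_zero_iff.2 hd2,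
    norm_ne_zero_iff.2 hz3, norm_ne_zero_iff.2 hy4, norm_ne_zero_iff.2 hu4]
  linear_combination (⟪resid X u, resid X d⟫ * γ) * hgram

end Instrument

theorem point_identification_valid_iv_general
    (X : Submodule ℝ H) [CompleteSpace X] (y d z u : H)
    [CompleteSpace ↥(X ⊔ (ℝ ∙ z))] [CompleteSpace ↥(X ⊔ (ℝ ∙ d))]
    [CompleteSpace ↥(X ⊔ (ℝ ∙ z) ⊔ (ℝ ∙ d))] [CompleteSpace ↥(X ⊔ (ℝ ∙ u) ⊔ (ℝ ∙ d))]
    [CompleteSpace ↥(X ⊔ (ℝ ∙ z) ⊔ (ℝ ∙ u))]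
    (hd : resid X d ≠ 0) (hz : resid X z ≠ 0)
    (hdz : ⟪resid X d, resid X z⟫ ≠ 0)
    (hd2 : resid (X ⊔ (ℝ ∙ z)) d ≠ 0)
    (hz3 : resid (X ⊔ (ℝ ∙ d)) z ≠ 0)
    (hy4 : resid (X ⊔ (ℝ ∙ z) ⊔ (ℝ ∙ d)) y ≠ 0) (hu4 : resid (X ⊔ (ℝ ∙ z) ⊔ (ℝ ∙ d)) u ≠ 0)
    (hd6 : resid (X ⊔ (ℝ ∙ z) ⊔ (ℝ ∙ u)) d ≠ 0)
    (hexo : Rp z u X = 0)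
    (hexcl : Rp y z (X ⊔ (ℝ ∙ u) ⊔ (ℝ ∙ d)) = 0) :
    fp d u (X ⊔ (ℝ ∙ z)) * Rp y u (X ⊔ (ℝ ∙ z) ⊔ (ℝ ∙ d)) =
        -(fp y z (X ⊔ (ℝ ∙ d)) / Rp d z X) ∧
    betaReg y d (X ⊔ (ℝ ∙ z) ⊔ (ℝ ∙ u)) =
        ⟪resid X y, resid X z⟫ / ⟪resid X d, resid X z⟫ := by
  obtain ⟨m, hm, γ, β, hy_eq⟩ := exists_eq_add_smul_add_smul_add_resid X u d y
  set r := resid (X ⊔ (ℝ ∙ u) ⊔ (ℝ ∙ d)) y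
  have hzr : ⟪z, r⟫ = 0 := by
    rw [← inner_resid_resid_left, real_inner_comm]
    exact Rp_eq_zero_iff.1 hexcl
  obtain ⟨hrXu, hdr⟩ :=
    mem_orthogonal_sup_span_iff.1 (resid_mem_orthogonal (X ⊔ (ℝ ∙ u) ⊔ (ℝ ∙ d)) y)
  obtain ⟨hrX, hur⟩ := mem_orthogonal_sup_span_iff.1 hrXu
  have hr : r ∈ (X ⊔ (ℝ ∙ z) ⊔ (ℝ ∙ u) ⊔ (ℝ ∙ d))ᗮ := by
    simp only [mem_orthogonal_sup_span_iff]
    exact ⟨⟨⟨hrX, hzr⟩, hur⟩, hdr⟩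
  have hzu := Rp_eq_zero_iff.1 hexo
  exact ⟨fp_mul_Rp_eq_neg_fp_div_Rp hm hr hy_eq hzu hd hz hdz hd2 hz3 hy4 hu4,
    betaReg_eq_inner_div_inner hm hr hy_eq hzu hdz hd6⟩

/-- point identification under a valid instrument. -/
theorem point_identification_valid_iv [CompleteSpace H]
    (X : Submodule ℝ H) [CompleteSpace X] (y d z u : H)
    [CompleteSpace ↥(X ⊔ (ℝ ∙ z))] [CompleteSpace ↥(X ⊔ (ℝ ∙ d))]
    [CompleteSpace ↥(X ⊔ (ℝ ∙ z) ⊔ (ℝ ∙ d))] [CompleteSpace ↥(X ⊔ (ℝ ∙ u) ⊔ (ℝ ∙ d))]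
    [CompleteSpace ↥(X ⊔ (ℝ ∙ z) ⊔ (ℝ ∙ u))]
    (hy : resid X y ≠ 0) (hd : resid X d ≠ 0) (hz : resid X z ≠ 0) (hu : resid X u ≠ 0)
    (hdz : ⟪resid X d, resid X z⟫ ≠ 0)
    (hd2 : resid (X ⊔ (ℝ ∙ z)) d ≠ 0) (hu2 : resid (X ⊔ (ℝ ∙ z)) u ≠ 0)
    (hy3 : resid (X ⊔ (ℝ ∙ d)) y ≠ 0) (hz3 : resid (X ⊔ (ℝ ∙ d)) z ≠ 0)
    (hy4 : resid (X ⊔ (ℝ ∙ z) ⊔ (ℝ ∙ d)) y ≠ 0) (hu4 : resid (X ⊔ (ℝ ∙ z) ⊔ (ℝ ∙ d)) u ≠ 0)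
    (hy5 : resid (X ⊔ (ℝ ∙ u) ⊔ (ℝ ∙ d)) y ≠ 0) (hz5 : resid (X ⊔ (ℝ ∙ u) ⊔ (ℝ ∙ d)) z ≠ 0)
    (hd6 : resid (X ⊔ (ℝ ∙ z) ⊔ (ℝ ∙ u)) d ≠ 0)
    (hexo : Rp z u X = 0)
    (hexcl : Rp y z (X ⊔ (ℝ ∙ u) ⊔ (ℝ ∙ d)) = 0) :
    fp d u (X ⊔ (ℝ ∙ z)) * Rp y u (X ⊔ (ℝ ∙ z) ⊔ (ℝ ∙ d)) =
        -(fp y z (X ⊔ (ℝ ∙ d)) / Rp d z X) ∧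
    betaReg y d (X ⊔ (ℝ ∙ z) ⊔ (ℝ ∙ u)) =
        ⟪resid X y, resid X z⟫ / ⟪resid X d, resid X z⟫ :=
  point_identification_valid_iv_general X y d z u hd hz hdz hd2 hz3 hy4 hu4 hd6 hexo hexcl
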